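/- arXiv:2207.05912 — 3 statements merged into one kernel-verified Lean document; each statement's English description precedes it below -/
import Mathlib

section
/- Let λ₁ < λ₂ < ⋯ < λₙ be positive reals, w₁,…,wₙ ≥ 0 weights not all zero, and fix L ∈ {2,…,n}. If Σ_{i=L}^{n} w_i > Σ_{i=1}^{L-1} w_i and α = (Σᵢ wᵢ)/(Σᵢ λᵢ wᵢ) satisfies αλ_L > 1, then αλ_L − 1 ≤ (λ_L − λ₁)/(λ_L + λ₁). -/
/-!
Write `S = ∑ wᵢ`, `T = ∑ λᵢ wᵢ` and `α = S / T`. Against the threshold `(λ_L + λ₁) / 2`, each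
index below `L` contributes at most `wᵢ (λ_L − λ₁) / 2` to `S (λ_L + λ₁) / 2 - T` and each index
from `L` on at least that much with the opposite sign, so dominance of the high-index weights
gives `S (λ_L + λ₁) ≤ 2 T`. This is the claimed bound after clearing denominators.
-/

open Finset

theorem sum_mul_add_le_two_mul_sum_mul {ι : Type*} [Fintype ι] [LinearOrder ι]
    {lam w : ι → ℝ} (hmono : Monotone lam) (hw : ∀ i, 0 ≤ w i) {m L : ι}
    (hm : ∀ i, lam m ≤ lam i)
    (hdom : ∑ i ∈ univ.filter (fun i => i < L), w i ≤ ∑ i ∈ univ.filter (fun i => L ≤ i), w i) :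
    (∑ i, w i) * (lam L + lam m) ≤ 2 * ∑ i, lam i * w i := by
  have hlow : ∑ i ∈ univ.filter (fun i => i < L), w i * (lam L + lam m - 2 * lam i)
      ≤ ∑ i ∈ univ.filter (fun i => i < L), (lam L - lam m) * w i :=
    sum_le_sum fun i _ => by nlinarith [hw i, hm i]
  have hhigh : ∑ i ∈ univ.filter (fun i => ¬i < L), w i * (lam L + lam m - 2 * lam i)
      ≤ ∑ i ∈ univ.filter (fun i => L ≤ i), -((lam L - lam m) * w i) := by
    simp only [not_lt]
    exact sum_le_sum fun i hi => by nlinarith [hw i, hmono (mem_filter.mp hi).2]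
  have hsplit := sum_filter_add_sum_filter_not univ (fun i => i < L)
    (fun i => w i * (lam L + lam m - 2 * lam i))
  have hexpand : ∑ i, w i * (lam L + lam m - 2 * lam i)
      = (∑ i, w i) * (lam L + lam m) - 2 * ∑ i, lam i * w i := by
    rw [sum_mul, mul_sum, ← sum_sub_distrib]
    exact sum_congr rfl fun i _ => by ring
  rw [← mul_sum] at hlow
  rw [sum_neg_distrib, ← mul_sum] at hhigh
  nlinarith [hm L]

theorem div_mul_sub_one_le_div_of_mul_add_le {S T a b : ℝ} (hT : 0 < T) (ha : 0 ≤ a)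
    (hab : 0 < a + b) (h : S * (a + b) ≤ 2 * T) :
    S / T * a - 1 ≤ (a - b) / (a + b) := by
  rw [div_mul_eq_mul_div, div_sub_one hT.ne', div_le_div_iff₀ hT hab]
  nlinarith [mul_le_mul_of_nonneg_left h ha]

theorem stmt6_general {n : ℕ} (hn : 0 < n) (lam w : Fin n → ℝ)
    (hmono : StrictMono lam) (hpos : ∀ i, 0 < lam i)
    (hw : ∀ i, 0 ≤ w i)
    (L : Fin n)
    (hdom : ∑ i ∈ univ.filter (fun i => i < L), w i < ∑ i ∈ univ.filter (fun i => L ≤ i), w i) :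
    (∑ i, w i) / (∑ i, lam i * w i) * lam L - 1 ≤
      (lam L - lam ⟨0, hn⟩) / (lam L + lam ⟨0, hn⟩) := by
  have hmin : ∀ i, lam ⟨0, hn⟩ ≤ lam i := fun i => hmono.monotone (Nat.zero_le i)
  have hS : 0 < ∑ i, w i :=
    calc 0 ≤ ∑ i ∈ univ.filter (fun i => i < L), w i := sum_nonneg fun i _ => hw i
      _ < ∑ i ∈ univ.filter (fun i => L ≤ i), w i := hdom
      _ ≤ ∑ i, w i := sum_le_univ_sum_of_nonneg hw
  have hT : 0 < ∑ i, lam i * w i :=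
    calc 0 < lam ⟨0, hn⟩ * ∑ i, w i := mul_pos (hpos _) hS
      _ ≤ ∑ i, lam i * w i := by
        rw [mul_sum]
        exact sum_le_sum fun i _ => mul_le_mul_of_nonneg_right (hmin i) (hw i)
  exact div_mul_sub_one_le_div_of_mul_add_le hT (hpos L).le (add_pos (hpos L) (hpos _))
    (sum_mul_add_le_two_mul_sum_mul hmono.monotone hw hmin hdom.le)

/-- Key inequality in the R-linear convergence proof: if the weights with index `≥ L`
dominate those with index `< L`, and the weighted Rayleigh-quotient stepsize
`α = (Σ wᵢ)/(Σ λᵢ wᵢ)` satisfies `αλ_L > 1`, then `αλ_L − 1 ≤ (λ_L − λ₁)/(λ_L + λ₁)`. -/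
theorem stmt6 {n : ℕ} (hn : 0 < n) (lam w : Fin n → ℝ)
    (hmono : StrictMono lam) (hpos : ∀ i, 0 < lam i)
    (hw : ∀ i, 0 ≤ w i) (hwne : w ≠ 0)
    (L : Fin n) (hL : 1 ≤ (L : ℕ))
    (hdom : ∑ i ∈ univ.filter (fun i => i < L), w i < ∑ i ∈ univ.filter (fun i => L ≤ i), w i)
    (hα : 1 < (∑ i, w i) / (∑ i, lam i * w i) * lam L) :
    (∑ i, w i) / (∑ i, lam i * w i) * lam L - 1 ≤
      (lam L - lam ⟨0, hn⟩) / (lam L + lam ⟨0, hn⟩) :=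
  stmt6_general hn lam w hmono hpos hw L hdom
end

section
/- Suppose a gradient method for the quadratic f(x)=½xᵀAx−bᵀx with A = diag(λ₁,…,λₙ), 0<λ₁<⋯<λₙ, uses stepsizes with λ₁ ≤ α_k^{-1} ≤ M₁ (M₁ ≥ λ₁) and α_k ≤ (g_{v(k)}ᵀ ψ(A) g_{v(k)})/(g_{v(k)}ᵀ A ψ(A) g_{v(k)}) for some v(k) ∈ {k, k−1, …, max{k−m+1, 0}} and a function ψ positive on [λ₁, λₙ]. Then either g_k = 0 for some finite k, or for every component i there is a constant C_i (depending only on the first m gradients and the data) such that |g_k^{(i)}| ≤ C_i θ^k for all k, where θ = 1 − λ₁/M₁. -/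
set_option maxHeartbeats 1000000 in
/-- Theorem 1: any gradient method on a diagonal quadratic whose stepsizes satisfy
Property B (inverse stepsize in `[λ₁, M₁]` and bounded above by a delayed generalized
Rayleigh quotient with weight function `ψ` positive on `[λ₁, λₙ]`) either terminates
with `g_k = 0` or converges componentwise R-linearly at rate `θ = 1 − λ₁/M₁`. -/
theorem stmt9 {n : ℕ} (hn : 0 < n) (lam : Fin n → ℝ)
    (hpos : ∀ i, 0 < lam i) (hmono : StrictMono lam)
    (b : Fin n → ℝ) (M1 : ℝ) (hM : lam ⟨0, hn⟩ ≤ M1)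
    (m : ℕ) (hm : 1 ≤ m)
    (ψ : ℝ → ℝ)
    (hψ : ∀ z ∈ Set.Icc (lam ⟨0, hn⟩) (lam ⟨n - 1, by omega⟩), 0 < ψ z)
    (x : ℕ → Fin n → ℝ) (g : ℕ → Fin n → ℝ) (α : ℕ → ℝ)
    (hg : ∀ k i, g k i = lam i * x k i - b i)
    (hstep : ∀ k i, x (k + 1) i = x k i - α k * g k i)
    (hαpos : ∀ k, 0 < α k)
    (hα1 : ∀ k, lam ⟨0, hn⟩ ≤ (α k)⁻¹ ∧ (α k)⁻¹ ≤ M1)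
    (v : ℕ → ℕ) (hv : ∀ k, v k ≤ k ∧ k < v k + m)
    (hα2 : ∀ k, g (v k) ≠ 0 → α k ≤
      (∑ i, ψ (lam i) * (g (v k) i) ^ 2) / (∑ i, lam i * ψ (lam i) * (g (v k) i) ^ 2)) :
    (∃ k, g k = 0) ∨
      ∀ i, ∃ C : ℝ, 0 ≤ C ∧ ∀ k, |g k i| ≤ C * (1 - lam ⟨0, hn⟩ / M1) ^ k := by
  by_cases hzero : ∃ k, g k = 0
  · exact Or.inl hzero
  right
  push_neg at hzero
  set l0 : Fin n := ⟨0, hn⟩ with hl0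
  set lam0 : ℝ := lam l0 with hlam0
  have hlam0pos : 0 < lam0 := hpos l0
  have hM1pos : 0 < M1 := lt_of_lt_of_le hlam0pos hM
  set θ : ℝ := 1 - lam0 / M1 with hθdef
  -- basic facts
  have hl0le : ∀ i : Fin n, lam0 ≤ lam i := by
    intro i
    exact hmono.monotone (by rw [Fin.le_def]; exact Nat.zero_le _)
  have hψall : ∀ i : Fin n, 0 < ψ (lam i) := by
    intro i
    have hle : i ≤ (⟨n - 1, by omega⟩ : Fin n) := by
      rw [Fin.le_def]
      show (i : ℕ) ≤ n - 1
      have := i.isLt; omega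
    exact hψ _ ⟨hl0le i, hmono.monotone hle⟩
  have hrec : ∀ k i, g (k + 1) i = (1 - α k * lam i) * g k i := by
    intro k i
    simp only [hg, hstep]
    ring
  have hαub : ∀ k, α k * lam0 ≤ 1 := by
    intro k
    have h := (hα1 k).1
    have h2 := inv_anti₀ hlam0pos h
    rw [inv_inv] at h2
    calc α k * lam0 ≤ lam0⁻¹ * lam0 := mul_le_mul_of_nonneg_right h2 hlam0pos.le
      _ = 1 := inv_mul_cancel₀ (ne_of_gt hlam0pos)
  have hαM : ∀ k, 1 ≤ α k * M1 := by
    intro k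
    have h := (hα1 k).2
    have h2 : (α k) * (α k)⁻¹ ≤ α k * M1 :=
      mul_le_mul_of_nonneg_left h (le_of_lt (hαpos k))
    rwa [mul_inv_cancel₀ (ne_of_gt (hαpos k))] at h2
  have htermnn : ∀ (p : ℕ) (j : Fin n), 0 ≤ lam j * ψ (lam j) * (g p j) ^ 2 :=
    fun p j => mul_nonneg (mul_nonneg (hpos j).le (hψall j).le) (sq_nonneg _)
  -- positivity of denominators
  have hDpos : ∀ p : ℕ, 0 < ∑ i, lam i * ψ (lam i) * (g p i) ^ 2 := by
    intro p
    obtain ⟨j, hj⟩ := Function.ne_iff.1 (hzero p)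
    have h2 : 0 < lam j * ψ (lam j) * (g p j) ^ 2 := by
      have hsq : 0 < (g p j) ^ 2 := (sq_abs (g p j)) ▸ pow_pos (abs_pos.2 hj) 2
      exact mul_pos (mul_pos (hpos j) (hψall j)) hsq
    calc (0:ℝ) < lam j * ψ (lam j) * (g p j) ^ 2 := h2
      _ ≤ _ := Finset.single_le_sum (fun j _ => htermnn p j) (Finset.mem_univ j)
  -- θ ≤ 0 case : contradiction
  rcases le_or_gt θ 0 with hθ0 | hθpos
  · exfalso
    rw [hθdef] at hθ0
    have hMle : 1 ≤ lam0 / M1 := by linarith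
    rw [le_div_iff₀ hM1pos, one_mul] at hMle
    have hMeq : M1 = lam0 := le_antisymm hMle hM
    apply hzero 1
    have hαeq : ∀ k, α k = lam0⁻¹ := by
      intro k
      have h1 := (hα1 k).1
      have h2 := (hα1 k).2
      rw [hMeq] at h2
      have h3 : (α k)⁻¹ = lam0 := le_antisymm h2 h1
      rw [← h3, inv_inv]
    have hv0 : v 0 = 0 := Nat.le_zero.1 (hv 0).1
    have hq := hα2 0 (by rw [hv0]; exact hzero 0)
    rw [hv0, hαeq 0] at hq
    have hD := hDpos 0
    rw [le_div_iff₀ hD] at hq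
    have hDN : (∑ i, lam i * ψ (lam i) * (g 0 i) ^ 2)
        ≤ lam0 * ∑ i, ψ (lam i) * (g 0 i) ^ 2 := by
      have h4 := mul_le_mul_of_nonneg_left hq hlam0pos.le
      rwa [← mul_assoc, mul_inv_cancel₀ (ne_of_gt hlam0pos), one_mul] at h4
    have hsum : ∑ i, (lam i - lam0) * (ψ (lam i) * (g 0 i) ^ 2) ≤ 0 := by
      have heq : ∑ i, (lam i - lam0) * (ψ (lam i) * (g 0 i) ^ 2)
          = (∑ i, lam i * ψ (lam i) * (g 0 i) ^ 2)
            - lam0 * ∑ i, ψ (lam i) * (g 0 i) ^ 2 := by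
        rw [Finset.mul_sum, ← Finset.sum_sub_distrib]
        exact Finset.sum_congr rfl fun i _ => by ring
      rw [heq]
      linarith
    have hzero0 : ∀ i : Fin n, i ≠ l0 → g 0 i = 0 := by
      intro i hi
      by_contra hgi
      have hlt : lam0 < lam i := by
        apply hmono
        rw [Fin.lt_def]
        show 0 < (i : ℕ)
        rcases Nat.eq_zero_or_pos (i : ℕ) with h | h
        · exact absurd (Fin.ext h) hi
        · exact h
      have hterm : 0 < (lam i - lam0) * (ψ (lam i) * (g 0 i) ^ 2) := by
        have hsq : 0 < (g 0 i) ^ 2 := (sq_abs (g 0 i)) ▸ pow_pos (abs_pos.2 hgi) 2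
        exact mul_pos (by linarith) (mul_pos (hψall i) hsq)
      have hle : (lam i - lam0) * (ψ (lam i) * (g 0 i) ^ 2)
          ≤ ∑ j, (lam j - lam0) * (ψ (lam j) * (g 0 j) ^ 2) := by
        apply Finset.single_le_sum (fun j _ => ?_) (Finset.mem_univ i)
        have h5 := hl0le j
        exact mul_nonneg (by linarith) (mul_nonneg (hψall j).le (sq_nonneg _))
      linarith
    funext i
    simp only [Pi.zero_apply]
    rw [hrec 0 i, hαeq 0]
    by_cases hi : i = l0
    · rw [hi, inv_mul_cancel₀ (ne_of_gt hlam0pos)]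
      ring
    · rw [hzero0 i hi]; ring
  -- main case : θ > 0
  have hθlt1 : θ < 1 := by
    have h1 : 0 < lam0 / M1 := div_pos hlam0pos hM1pos
    rw [hθdef]; linarith
  have hθle1 : θ ≤ 1 := le_of_lt hθlt1
  -- main induction over components
  have main : ∀ d : ℕ, ∀ i : Fin n, (i : ℕ) < d →
      ∃ C : ℝ, 0 ≤ C ∧ ∀ k, |g k i| ≤ C * θ ^ k := by
    intro d
    induction d with
    | zero => intro i hi; omega
    | succ d ihd =>
      intro i hi
      have hCex : ∀ j : Fin n, ∃ C : ℝ, 0 ≤ C ∧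
          ((j : ℕ) < (i : ℕ) → ∀ k, |g k j| ≤ C * θ ^ k) := by
        intro j
        by_cases h : (j : ℕ) < (i : ℕ)
        · obtain ⟨C, hC0, hCb⟩ := ihd j (by omega)
          exact ⟨C, hC0, fun _ => hCb⟩
        · exact ⟨0, le_refl _, fun h' => absurd h' h⟩
      choose C hC0 hCb using hCex
      have hψipos : 0 < ψ (lam i) := hψall i
      set D : ℝ := ∑ j ∈ Finset.univ.filter (fun j => j < i), ψ (lam j) * (C j) ^ 2
        with hDdef
      have hD0 : 0 ≤ D :=
        Finset.sum_nonneg fun j _ => mul_nonneg (hψall j).le (sq_nonneg _)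
      -- bound on the "low" part of any gradient
      have hSlow : ∀ p : ℕ,
          ∑ j ∈ Finset.univ.filter (fun j => j < i), ψ (lam j) * (g p j) ^ 2
            ≤ D * (θ ^ p) ^ 2 := by
        intro p
        rw [hDdef, Finset.sum_mul]
        apply Finset.sum_le_sum
        intro j hj
        rw [Finset.mem_filter] at hj
        have hjlt : (j : ℕ) < (i : ℕ) := Fin.lt_def.mp hj.2
        have hb := hCb j hjlt p
        have h1 : (g p j) ^ 2 ≤ (C j * θ ^ p) ^ 2 := by
          have h2 : |g p j| ^ 2 ≤ (C j * θ ^ p) ^ 2 :=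
            pow_le_pow_left₀ (abs_nonneg _) hb 2
          rwa [sq_abs] at h2
        calc ψ (lam j) * (g p j) ^ 2 ≤ ψ (lam j) * (C j * θ ^ p) ^ 2 :=
              mul_le_mul_of_nonneg_left h1 (hψall j).le
          _ = ψ (lam j) * (C j) ^ 2 * (θ ^ p) ^ 2 := by ring
      set σ : ℝ := lam i / lam0 with hσdef
      have hσ1 : 1 ≤ σ := (one_le_div hlam0pos).2 (hl0le i)
      have hσabs : ∀ k, |1 - α k * lam i| ≤ σ := by
        intro k
        have h1 : α k * lam i ≤ σ := by
          rw [hσdef, le_div_iff₀ hlam0pos]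
          nlinarith [hαub k, hpos i, hαpos k]
        have h2 : 0 < α k * lam i := mul_pos (hαpos k) (hpos i)
        rw [abs_le]
        constructor <;> nlinarith
      have hσstep : ∀ p e, |g (p + e) i| ≤ σ ^ e * |g p i| := by
        intro p e
        induction e with
        | zero => simp
        | succ e ihe =>
          have heq : p + (e + 1) = (p + e) + 1 := rfl
          rw [heq, hrec, abs_mul]
          calc |1 - α (p + e) * lam i| * |g (p + e) i|
              ≤ σ * (σ ^ e * |g p i|) := by
                apply mul_le_mul (hσabs _) ihe (abs_nonneg _) (by linarith)
            _ = σ ^ (e + 1) * |g p i| := by ring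
      -- key contraction property
      have hcontr : ∀ k : ℕ,
          lam i * (∑ j ∈ Finset.univ.filter (fun j => j < i),
              ψ (lam j) * (g (v k) j) ^ 2)
            ≤ θ * (lam0 * (ψ (lam i) * (g (v k) i) ^ 2)) →
          |1 - α k * lam i| ≤ θ := by
        intro k hcase
        set p := v k with hp
        set N : ℝ := ∑ j, ψ (lam j) * (g p j) ^ 2 with hN
        set Dn : ℝ := ∑ j, lam j * ψ (lam j) * (g p j) ^ 2 with hDn
        have hDnpos : 0 < Dn := hDpos p
        have hq := hα2 k (hzero p)
        rw [← hp, ← hN, ← hDn, le_div_iff₀ hDnpos] at hq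
        set S : ℝ := ∑ j ∈ Finset.univ.filter (fun j => j < i),
            ψ (lam j) * (g p j) ^ 2 with hS
        -- lam i * N - Dn ≤ lam i * S
        have hsplit : lam i * N - Dn ≤ lam i * S := by
          have he : lam i * N - Dn
              = ∑ j, (lam i - lam j) * (ψ (lam j) * (g p j) ^ 2) := by
            rw [hN, hDn, Finset.mul_sum, ← Finset.sum_sub_distrib]
            exact Finset.sum_congr rfl fun j _ => by ring
          have hC2 : ∑ j, (lam i - lam j) * (ψ (lam j) * (g p j) ^ 2)
              = (∑ j ∈ Finset.univ.filter (fun j => j < i),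
                  (lam i - lam j) * (ψ (lam j) * (g p j) ^ 2))
                + ∑ j ∈ Finset.univ.filter (fun j => ¬ j < i),
                  (lam i - lam j) * (ψ (lam j) * (g p j) ^ 2) :=
            (Finset.sum_filter_add_sum_filter_not Finset.univ (fun j => j < i) _).symm
          have hA : ∑ j ∈ Finset.univ.filter (fun j => j < i),
              (lam i - lam j) * (ψ (lam j) * (g p j) ^ 2)
              ≤ ∑ j ∈ Finset.univ.filter (fun j => j < i),
                  lam i * (ψ (lam j) * (g p j) ^ 2) := by
            apply Finset.sum_le_sum
            intro j _
            have h6 : (0:ℝ) ≤ ψ (lam j) * (g p j) ^ 2 :=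
              mul_nonneg (hψall j).le (sq_nonneg _)
            have h7 : lam i - lam j ≤ lam i := by linarith [hpos j]
            exact mul_le_mul_of_nonneg_right h7 h6
          have hB : ∑ j ∈ Finset.univ.filter (fun j => ¬ j < i),
              (lam i - lam j) * (ψ (lam j) * (g p j) ^ 2) ≤ 0 := by
            apply Finset.sum_nonpos
            intro j hj
            rw [Finset.mem_filter] at hj
            have hij : i ≤ j := not_lt.1 hj.2
            have hle : lam i ≤ lam j := hmono.monotone hij
            have h6 : (0:ℝ) ≤ ψ (lam j) * (g p j) ^ 2 :=
              mul_nonneg (hψall j).le (sq_nonneg _)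
            exact mul_nonpos_of_nonpos_of_nonneg (by linarith) h6
          have hD2 : ∑ j ∈ Finset.univ.filter (fun j => j < i),
              lam i * (ψ (lam j) * (g p j) ^ 2) = lam i * S := by
            rw [hS, Finset.mul_sum]
          linarith [he, hC2, hA, hB, hD2]
        -- single-term bound : lam0 * ψi * g_i² ≤ Dn
        have hsingle : lam0 * (ψ (lam i) * (g p i) ^ 2) ≤ Dn := by
          have h1 : lam i * ψ (lam i) * (g p i) ^ 2 ≤ Dn := by
            rw [hDn]
            exact Finset.single_le_sum (fun j _ => htermnn p j) (Finset.mem_univ i)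
          have h2 := hl0le i
          have h3 : (0:ℝ) ≤ ψ (lam i) * (g p i) ^ 2 :=
            mul_nonneg (hψall i).le (sq_nonneg _)
          nlinarith
        -- upper bound : α k * lam i ≤ 1 + θ
        have hup : α k * lam i ≤ 1 + θ := by
          have h2 : θ * (lam0 * (ψ (lam i) * (g p i) ^ 2)) ≤ θ * Dn :=
            mul_le_mul_of_nonneg_left hsingle hθpos.le
          have h1 : lam i * N ≤ Dn + θ * Dn := by linarith [hsplit, hcase, h2]
          have h3 : α k * lam i * Dn ≤ lam i * N := by
            nlinarith [mul_le_mul_of_nonneg_left hq (hpos i).le]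
          nlinarith [hDnpos]
        -- lower bound : lam0 / M1 ≤ α k * lam i
        have hlow : lam0 / M1 ≤ α k * lam i := by
          rw [div_le_iff₀ hM1pos]
          nlinarith [hαM k, hl0le i, hαpos k, hlam0pos]
        rw [abs_le]
        constructor
        · linarith
        · rw [hθdef]; linarith [hlow]
      -- value of E
      set E : ℝ := Real.sqrt (lam i * D / (θ * (lam0 * ψ (lam i)))) with hEdef
      have hE0 : 0 ≤ E := Real.sqrt_nonneg _
      have hdenpos : 0 < θ * (lam0 * ψ (lam i)) :=
        mul_pos hθpos (mul_pos hlam0pos hψipos)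
      have hEsq : E ^ 2 = lam i * D / (θ * (lam0 * ψ (lam i))) := by
        rw [hEdef, sq]
        exact Real.mul_self_sqrt
          (div_nonneg (mul_nonneg (hpos i).le hD0) hdenpos.le)
      -- the constant
      have hrange : (Finset.range m).Nonempty := Finset.nonempty_range_iff.2 (by omega)
      set Cm : ℝ := (Finset.range m).sup' hrange (fun l => |g l i| / θ ^ l) with hCm
      set Ci : ℝ := max Cm (σ ^ m * E / θ ^ m) with hCi
      have hCm0 : 0 ≤ Cm := by
        have h1 : |g 0 i| / θ ^ 0 ≤ Cm :=
          Finset.le_sup' (fun l => |g l i| / θ ^ l) (Finset.mem_range.2 (by omega))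
        simp only [pow_zero, div_one] at h1
        exact le_trans (abs_nonneg _) h1
      have hCi0 : 0 ≤ Ci := le_trans hCm0 (le_max_left _ _)
      refine ⟨Ci, hCi0, ?_⟩
      intro k
      induction k using Nat.strong_induction_on with
      | _ k ihk =>
        by_cases hk : k < m
        · have h1 : |g k i| / θ ^ k ≤ Cm :=
            Finset.le_sup' (fun l => |g l i| / θ ^ l) (Finset.mem_range.2 hk)
          have hθk : (0:ℝ) < θ ^ k := pow_pos hθpos k
          rw [div_le_iff₀ hθk] at h1
          calc |g k i| ≤ Cm * θ ^ k := h1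
            _ ≤ Ci * θ ^ k :=
              mul_le_mul_of_nonneg_right (le_max_left _ _) (le_of_lt hθk)
        · -- k ≥ m ≥ 1
          obtain ⟨k', rfl⟩ : ∃ k', k = k' + 1 := ⟨k - 1, by omega⟩
          set p := v k' with hpdef
          obtain ⟨hp1, hp2⟩ := hv k'
          by_cases hcase : lam i * (∑ j ∈ Finset.univ.filter (fun j => j < i),
              ψ (lam j) * (g p j) ^ 2) ≤ θ * (lam0 * (ψ (lam i) * (g p i) ^ 2))
          · -- contraction case
            have h1 := hcontr k' hcase
            have h2 := ihk k' (by omega)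
            calc |g (k' + 1) i| = |1 - α k' * lam i| * |g k' i| := by
                  rw [hrec, abs_mul]
              _ ≤ θ * (Ci * θ ^ k') :=
                  mul_le_mul h1 h2 (abs_nonneg _) (le_of_lt hθpos)
              _ = Ci * θ ^ (k' + 1) := by ring
          · -- small component case
            push_neg at hcase
            have hS := hSlow p
            have hgp2 : (g p i) ^ 2 ≤ E ^ 2 * (θ ^ p) ^ 2 := by
              have h1 : θ * (lam0 * (ψ (lam i) * (g p i) ^ 2))
                  ≤ lam i * (D * (θ ^ p) ^ 2) := by
                calc θ * (lam0 * (ψ (lam i) * (g p i) ^ 2))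
                    ≤ lam i * (∑ j ∈ Finset.univ.filter (fun j => j < i),
                        ψ (lam j) * (g p j) ^ 2) := le_of_lt hcase
                  _ ≤ lam i * (D * (θ ^ p) ^ 2) :=
                      mul_le_mul_of_nonneg_left hS (hpos i).le
              rw [hEsq, div_mul_eq_mul_div, le_div_iff₀ hdenpos]
              nlinarith [h1]
            have hgp : |g p i| ≤ E * θ ^ p := by
              have h1 : |g p i| = Real.sqrt ((g p i) ^ 2) :=
                (Real.sqrt_sq_eq_abs _).symm
              have h2 : E ^ 2 * (θ ^ p) ^ 2 = (E * θ ^ p) ^ 2 := by ring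
              rw [h1]
              calc Real.sqrt ((g p i) ^ 2) ≤ Real.sqrt ((E * θ ^ p) ^ 2) := by
                    apply Real.sqrt_le_sqrt; rw [← h2]; exact hgp2
                _ = |E * θ ^ p| := Real.sqrt_sq_eq_abs _
                _ = E * θ ^ p := abs_of_nonneg
                    (mul_nonneg hE0 (pow_pos hθpos p).le)
            set e := k' + 1 - p with hedef
            have hke : k' + 1 = p + e := by omega
            have hem : e ≤ m := by omega
            have hθm : (0:ℝ) < θ ^ m := pow_pos hθpos m
            have hkey : σ ^ e * E ≤ Ci * θ ^ e := by
              have h1 : σ ^ e ≤ σ ^ m := pow_le_pow_right₀ hσ1 hem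
              have h2 : θ ^ m ≤ θ ^ e := pow_le_pow_of_le_one hθpos.le hθle1 hem
              have h3 : σ ^ m * E / θ ^ m ≤ Ci := le_max_right _ _
              rw [div_le_iff₀ hθm] at h3
              calc σ ^ e * E ≤ σ ^ m * E := mul_le_mul_of_nonneg_right h1 hE0
                _ ≤ Ci * θ ^ m := h3
                _ ≤ Ci * θ ^ e := mul_le_mul_of_nonneg_left h2 hCi0
            calc |g (k' + 1) i| = |g (p + e) i| := by rw [hke]
              _ ≤ σ ^ e * |g p i| := hσstep p e
              _ ≤ σ ^ e * (E * θ ^ p) := mul_le_mul_of_nonneg_left hgp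
                    (pow_nonneg (by linarith) e)
              _ = (σ ^ e * E) * θ ^ p := by ring
              _ ≤ (Ci * θ ^ e) * θ ^ p :=
                  mul_le_mul_of_nonneg_right hkey (pow_pos hθpos p).le
              _ = Ci * θ ^ (p + e) := by ring
              _ = Ci * θ ^ (k' + 1) := by rw [hke]
  intro i
  exact main ((i : ℕ) + 1) i (by omega)
end

section
/- Let λ₁ < λ₂ < ⋯ < λₙ be positive reals with λ₁ = 1, and let g ∈ ℝⁿ. Fix l ∈ {1,…,n−1} and ε > 0. If P(l) = Σ_{i=1}^{l} (g^{(i)})² ≤ ε and (g^{(l+1)})² ≥ 2ε, then the inverse Rayleigh quotient satisfies (Σᵢ λᵢ (g^{(i)})²)/(Σᵢ (g^{(i)})²) ≥ (2/3) λ_{l+1}. -/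
open Finset

/-- If the first `l` eigencomponents of `g` are small (`P(l) ≤ ε`) while the `(l+1)`-th is
large (`(g^{(l+1)})² ≥ 2ε`), then the Rayleigh quotient is at least `(2/3)λ_{l+1}`.
Here `λ₁ = 1` and indices are zero-based, so the `(l+1)`-th component is `g ⟨l, _⟩`. -/
theorem stmt12 {n : ℕ} (lam : Fin n → ℝ) (hmono : StrictMono lam)
    (hpos : ∀ i, 0 < lam i) (hlam1 : ∀ h : 0 < n, lam ⟨0, h⟩ = 1)
    (g : Fin n → ℝ) (l : ℕ) (hl1 : 1 ≤ l) (hl2 : l ≤ n - 1) (hln : l < n)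
    (ε : ℝ) (hε : 0 < ε)
    (hP : ∑ i ∈ univ.filter (fun i : Fin n => (i : ℕ) < l), (g i) ^ 2 ≤ ε)
    (hbig : 2 * ε ≤ (g ⟨l, hln⟩) ^ 2) :
    (2 / 3) * lam ⟨l, hln⟩ ≤ (∑ i, lam i * (g i) ^ 2) / (∑ i, (g i) ^ 2) := by
  set P := ∑ i ∈ univ.filter (fun i : Fin n => (i : ℕ) < l), (g i) ^ 2 with hPdef
  set Q := ∑ i ∈ univ.filter (fun i : Fin n => ¬ (i : ℕ) < l), (g i) ^ 2 with hQdef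
  have hsplit : (∑ i, (g i) ^ 2) = P + Q :=
    (Finset.sum_filter_add_sum_filter_not univ _ _).symm
  have hP0 : 0 ≤ P := Finset.sum_nonneg fun i _ => sq_nonneg _
  have hQge : (g ⟨l, hln⟩) ^ 2 ≤ Q := by
    apply Finset.single_le_sum (fun i _ => sq_nonneg (g i))
    simp
  have hQpos : 0 < Q := lt_of_lt_of_le (by linarith) hQge
  have hD : 0 < P + Q := by linarith
  have hnum : lam ⟨l, hln⟩ * Q ≤ ∑ i, lam i * (g i) ^ 2 := by
    rw [← Finset.sum_filter_add_sum_filter_not univ (fun i : Fin n => ¬ (i : ℕ) < l)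
      (fun i => lam i * (g i) ^ 2)]
    have h1 : lam ⟨l, hln⟩ * Q ≤
        ∑ i ∈ univ.filter (fun i : Fin n => ¬ (i : ℕ) < l), lam i * (g i) ^ 2 := by
      rw [hQdef, Finset.mul_sum]
      apply Finset.sum_le_sum
      intro i hi
      simp only [Finset.mem_filter, not_lt] at hi
      have : lam ⟨l, hln⟩ ≤ lam i := hmono.monotone (by
        show (⟨l, hln⟩ : Fin n) ≤ i
        exact hi.2)
      exact mul_le_mul_of_nonneg_right this (sq_nonneg _)
    have h2 : 0 ≤ ∑ i ∈ univ.filter (fun i : Fin n => ¬¬ (i : ℕ) < l), lam i * (g i) ^ 2 :=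
      Finset.sum_nonneg fun i _ => mul_nonneg (hpos i).le (sq_nonneg _)
    linarith
  rw [hsplit, le_div_iff₀ hD]
  have hQ2P : 2 * P ≤ Q := by linarith
  have hlampos : 0 < lam ⟨l, hln⟩ := hpos _
  nlinarith [mul_le_mul_of_nonneg_left hQ2P hlampos.le]
end
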